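/- arXiv:1501.02239 — 3 statements merged into one kernel-verified Lean document; each statement's English description precedes it below -/
import Mathlib

section
/- Let P be a finite poset on V and A ⊆ V an antichain of P. Then contracting A (collapsing A to a single element, blocks of π_A being A and singletons) yields an acyclic preposet, i.e., the quotient preorder on π_A is a partial order. -/
/-- One step of the quotient preorder on the blocks of a partition `π`. -/
def blockStep {V : Type*} (P : PartialOrder V) (π : Set (Set V)) (B B' : Set V) : Prop :=
  B ∈ π ∧ B' ∈ π ∧ ∃ x ∈ B, ∃ y ∈ B', P.le x y

/-- The quotient preorder on blocks: the transitive closure of `blockStep`. -/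
def blockLe {V : Type*} (P : PartialOrder V) (π : Set (Set V)) : Set V → Set V → Prop :=
  Relation.TransGen (blockStep P π)

/-- The partition `π_S` of `V` whose blocks are `S` and the singletons `{v}`, `v ∉ S`. -/
def piS {V : Type*} (S : Set V) : Set (Set V) :=
  insert S {B | ∃ v, v ∉ S ∧ B = ({v} : Set V)}

/-!
Contracting `A` amounts to the preorder `contractLe A` on `V`: `x` is below `y` if `x ≤ y` or
if `x` lies below some element of `A` and `y` above some element of `A`; every path of blocks
lifts to it. Since `A` is an antichain, mutual comparability in this preorder forces `x = y`
or `x, y ∈ A`: e.g. `b ≤ x ≤ a` with `a, b ∈ A` gives `a = b` and hence `x = a`. Either way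
the two blocks coincide.
-/

def contractLe {V : Type*} [PartialOrder V] (A : Set V) (x y : V) : Prop :=
  x ≤ y ∨ (∃ a ∈ A, x ≤ a) ∧ (∃ b ∈ A, b ≤ y)

section Contract

variable {V : Type*} [PartialOrder V] {A : Set V} {x y z : V}

theorem contractLe_of_le (h : x ≤ y) : contractLe A x y := Or.inl h

theorem contractLe_of_mem (hx : x ∈ A) (hy : y ∈ A) : contractLe A x y :=
  Or.inr ⟨⟨x, hx, le_rfl⟩, ⟨y, hy, le_rfl⟩⟩

theorem contractLe_trans (hxy : contractLe A x y) (hyz : contractLe A y z) :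
    contractLe A x z := by
  rcases hxy with hxy | ⟨hxA, hAy⟩ <;> rcases hyz with hyz | ⟨⟨a, ha, hya⟩, hAz⟩
  · exact Or.inl (hxy.trans hyz)
  · exact Or.inr ⟨⟨a, ha, hxy.trans hya⟩, hAz⟩
  · obtain ⟨b, hb, hby⟩ := hAy
    exact Or.inr ⟨hxA, ⟨b, hb, hby.trans hyz⟩⟩
  · exact Or.inr ⟨hxA, hAz⟩

theorem mem_of_le_of_le_of_isAntichain (hA : IsAntichain (· ≤ ·) A) {a b : V} (ha : a ∈ A)
    (hb : b ∈ A) (hbx : b ≤ x) (hxa : x ≤ a) : x ∈ A := by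
  obtain rfl : b = a := hA.eq hb ha (hbx.trans hxa)
  rwa [le_antisymm hxa hbx]

theorem eq_or_mem_of_contractLe_of_contractLe (hA : IsAntichain (· ≤ ·) A)
    (hxy : contractLe A x y) (hyx : contractLe A y x) : x = y ∨ x ∈ A ∧ y ∈ A := by
  rcases hxy with hxy | ⟨⟨a, ha, hxa⟩, ⟨b, hb, hby⟩⟩ <;>
    rcases hyx with hyx | ⟨⟨c, hc, hyc⟩, ⟨d, hd, hdx⟩⟩
  · exact Or.inl (le_antisymm hxy hyx)
  · have hx := mem_of_le_of_le_of_isAntichain hA hc hd hdx (hxy.trans hyc)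
    have hy := mem_of_le_of_le_of_isAntichain hA hc hd (hdx.trans hxy) hyc
    exact Or.inr ⟨hx, hy⟩
  · have hx := mem_of_le_of_le_of_isAntichain hA ha hb (hby.trans hyx) hxa
    have hy := mem_of_le_of_le_of_isAntichain hA ha hb hby (hyx.trans hxa)
    exact Or.inr ⟨hx, hy⟩
  · exact Or.inr ⟨mem_of_le_of_le_of_isAntichain hA ha hd hdx hxa,
      mem_of_le_of_le_of_isAntichain hA hc hb hby hyc⟩

end Contract

section Blocks

variable {V : Type*} {A B B' : Set V} {x y : V}

theorem eq_of_mem_piS_of_mem (hB : B ∈ piS A) (hxB : x ∈ B) (hxA : x ∈ A) : B = A := by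
  rcases hB with rfl | ⟨v, hv, rfl⟩
  · rfl
  · rw [Set.mem_singleton_iff.mp hxB] at hxA
    exact absurd hxA hv

theorem eq_of_mem_piS_of_mem_of_mem (hB : B ∈ piS A) (hB' : B' ∈ piS A) (hxB : x ∈ B)
    (hxB' : x ∈ B') : B = B' := by
  by_cases hxA : x ∈ A
  · rw [eq_of_mem_piS_of_mem hB hxB hxA, eq_of_mem_piS_of_mem hB' hxB' hxA]
  · rcases hB with rfl | ⟨u, -, rfl⟩
    · exact absurd hxB hxA
    rcases hB' with rfl | ⟨v, -, rfl⟩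
    · exact absurd hxB' hxA
    rw [← Set.mem_singleton_iff.mp hxB, ← Set.mem_singleton_iff.mp hxB']

theorem contractLe_of_mem_piS [PartialOrder V] (hB : B ∈ piS A) (hx : x ∈ B) (hy : y ∈ B) :
    contractLe A x y := by
  rcases hB with rfl | ⟨v, -, rfl⟩
  · exact contractLe_of_mem hx hy
  · rw [Set.mem_singleton_iff.mp hx, Set.mem_singleton_iff.mp hy]
    exact contractLe_of_le le_rfl

theorem contractLe_of_blockLe [P : PartialOrder V] (h : blockLe P (piS A) B B') :
    ∀ x ∈ B, ∀ y ∈ B', contractLe A x y := by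
  have of_step : ∀ {C C'}, blockStep P (piS A) C C' → ∀ x ∈ C, ∀ y ∈ C', contractLe A x y := by
    rintro C C' ⟨hC, hC', u, hu, v, hv, huv⟩ x hx y hy
    exact contractLe_trans (contractLe_trans (contractLe_of_mem_piS hC hx hu)
      (contractLe_of_le huv)) (contractLe_of_mem_piS hC' hv hy)
  induction h with
  | single hstep => exact of_step hstep
  | tail _ hstep ih =>
    obtain ⟨c, hc, -⟩ := hstep.2.2
    exact fun x hx y hy => contractLe_trans (ih x hx c hc) (of_step hstep c hc y hy)

end Blocks

theorem mem_and_nonempty_of_blockLe {V : Type*} {P : PartialOrder V} {π : Set (Set V)}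
    {B B' : Set V} (h : blockLe P π B B') :
    (B ∈ π ∧ B.Nonempty) ∧ (B' ∈ π ∧ B'.Nonempty) := by
  obtain ⟨C, ⟨hB, -, x, hx, -⟩, -⟩ := Relation.TransGen.head'_iff.mp h
  obtain ⟨C', -, ⟨-, hB', -, -, y, hy, -⟩⟩ := Relation.TransGen.tail'_iff.mp h
  exact ⟨⟨hB, x, hx⟩, hB', y, hy⟩

theorem stmt_6_general (V : Type) (P : PartialOrder V) (A : Set V)
    (hA : ∀ x ∈ A, ∀ y ∈ A, x ≠ y → ¬ P.le x y ∧ ¬ P.le y x) :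
    ∀ B B', blockLe P (piS A) B B' → blockLe P (piS A) B' B → B = B' := by
  intro B B' hBB' hB'B
  have hAnti : IsAntichain (· ≤ ·) A := fun x hx y hy hxy => (hA x hx y hy hxy).1
  obtain ⟨⟨hB, x, hx⟩, hB', y, hy⟩ := mem_and_nonempty_of_blockLe hBB'
  rcases eq_or_mem_of_contractLe_of_contractLe hAnti (contractLe_of_blockLe hBB' x hx y hy)
      (contractLe_of_blockLe hB'B y hy x hx) with rfl | ⟨hxA, hyA⟩
  · exact eq_of_mem_piS_of_mem_of_mem hB hB' hx hy
  · rw [eq_of_mem_piS_of_mem hB hx hxA, eq_of_mem_piS_of_mem hB' hy hyA]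

/-- Contracting an antichain A of a finite poset P yields an acyclic
(antisymmetric) quotient preorder on the partition π_A. -/
theorem stmt_6 (V : Type) [Fintype V] (P : PartialOrder V) (A : Set V)
    (hA : ∀ x ∈ A, ∀ y ∈ A, x ≠ y → ¬ P.le x y ∧ ¬ P.le y x) :
    ∀ B B', blockLe P (piS A) B B' → blockLe P (piS A) B' B → B = B' :=
  stmt_6_general V P A hA
end

section
/- Let G = (V,E) be a finite graph with acyclic orientation ω, and let I be an order ideal of the poset P(G, ω) (the transitive closure of ω). Then there exists an acyclic orientation ω'' obtained from ω by a sequence of source-to-sink flips such that I is an order filter of P(G, ω''). -/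
/-- A directed cycle (closed directed walk with at least one edge). -/
def HasCycle {α : Type*} (r : α → α → Prop) : Prop :=
  ∃ (n : ℕ) (f : Fin (n + 1) → α),
    (∀ i : Fin n, r (f i.castSucc) (f i.succ)) ∧ r (f (Fin.last n)) (f 0)

/-- `r` is an orientation of the simple graph `G`: each edge gets exactly one
direction. -/
def IsOrientation {V : Type*} (G : SimpleGraph V) (r : V → V → Prop) : Prop :=
  (∀ i j : V, G.Adj i j ↔ (r i j ∨ r j i)) ∧ ∀ i j : V, r i j → ¬ r j i

/-- The orientation obtained from `r` by reversing all edges incident to `v`. -/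
def flipAt {V : Type*} (r : V → V → Prop) (v : V) : V → V → Prop :=
  fun i j => ((i = v ∨ j = v) ∧ r j i) ∨ (¬(i = v ∨ j = v) ∧ r i j)

/-- A single source-to-sink flipAt: flipping at a source vertex. -/
def FlipStep {V : Type*} (r r' : V → V → Prop) : Prop :=
  ∃ v : V, (∀ u : V, ¬ r u v) ∧ r' = flipAt r v

/-- Toric equivalence: generated by source-to-sink flips. -/
def ToricEquiv {V : Type*} (r r' : V → V → Prop) : Prop :=
  Relation.ReflTransGen FlipStep r r'

/-- `I` is an order ideal (down-closed set) of the reachability poset of `r`. -/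
def IsIdealOf {V : Type*} (r : V → V → Prop) (I : Set V) : Prop :=
  ∀ x y : V, Relation.ReflTransGen r x y → y ∈ I → x ∈ I

/-- `J` is an order filter (up-closed set) of the reachability poset of `r`. -/
def IsFilterOf {V : Type*} (r : V → V → Prop) (J : Set V) : Prop :=
  ∀ x y : V, Relation.ReflTransGen r x y → x ∈ J → y ∈ J

/-!
Flip the elements of `I` one at a time. What is left of `I` stays an order ideal of the
current orientation (the flipped vertex has become a sink), so a minimal element of it is a
source and may be flipped next. Once every element of `I` has been flipped, exactly the edges
between `I` and its complement are reversed: these all pointed into `I`, since `I` is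
down-closed, so they now point out of it and `I` is up-closed.
-/

variable {V : Type*} {r : V → V → Prop} {I : Set V}

theorem isIdealOf_iff : IsIdealOf r I ↔ ∀ x y, r x y → y ∈ I → x ∈ I := by
  refine ⟨fun hI x y hxy => hI x y (.single hxy), fun hI x y hxy hy => ?_⟩
  induction hxy with
  | refl => exact hy
  | tail _ hbc ih => exact ih (hI _ _ hbc hy)

theorem isFilterOf_iff : IsFilterOf r I ↔ ∀ x y, r x y → x ∈ I → y ∈ I := by
  refine ⟨fun hI x y hxy => hI x y (.single hxy), fun hI x y hxy hx => ?_⟩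
  induction hxy with
  | refl => exact hx
  | tail _ hbc ih => exact hI _ _ hbc ih

theorem exists_fin_path_of_reflTransGen {x z : V} (h : Relation.ReflTransGen r x z) :
    ∃ (n : ℕ) (f : Fin (n + 1) → V), f 0 = x ∧ f (Fin.last n) = z ∧
      ∀ i : Fin n, r (f i.castSucc) (f i.succ) := by
  induction h with
  | refl => exact ⟨0, fun _ => x, rfl, rfl, Fin.elim0⟩
  | @tail b c _ hbc ih =>
    obtain ⟨n, f, hf0, hflast, hf⟩ := ih
    refine ⟨n + 1, Fin.snoc f c, by simpa using hf0, by simp, Fin.lastCases ?_ fun i => ?_⟩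
    · simpa [hflast] using hbc
    · rw [← Fin.castSucc_succ, Fin.snoc_castSucc, Fin.snoc_castSucc]
      exact hf i

theorem HasCycle.of_transGen_self {x : V} (h : Relation.TransGen r x x) : HasCycle r := by
  obtain ⟨z, hxz, hzx⟩ := Relation.TransGen.tail'_iff.mp h
  obtain ⟨n, f, hf0, hflast, hf⟩ := exists_fin_path_of_reflTransGen hxz
  exact ⟨n, f, hf, hf0 ▸ hflast ▸ hzx⟩

theorem wellFounded_transGen_of_not_hasCycle [Finite V] (hacyc : ¬ HasCycle r) :
    WellFounded (Relation.TransGen r) :=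
  haveI : IsTrans V (Relation.TransGen r) := ⟨fun _ _ _ => Relation.TransGen.trans⟩
  haveI : Std.Irrefl (Relation.TransGen r) := ⟨fun _ h => hacyc (.of_transGen_self h)⟩
  Finite.wellFounded_of_trans_of_irrefl _

section Flip

variable {v : V}

@[simp] theorem flipAt_left_iff {y : V} : flipAt r v v y ↔ r y v := by
  simp [flipAt]

@[simp] theorem flipAt_right_iff {x : V} : flipAt r v x v ↔ r v x := by
  by_cases hx : x = v <;> simp [flipAt, hx]

theorem flipAt_iff_of_ne {x y : V} (hx : x ≠ v) (hy : y ≠ v) : flipAt r v x y ↔ r x y := by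
  simp [flipAt, hx, hy]

theorem not_hasCycle_flipAt (hacyc : ¬ HasCycle r) (hv : ∀ u, ¬ r u v) :
    ¬ HasCycle (flipAt r v) := by
  rintro ⟨n, f, hf, hlast⟩
  have hsink : ∀ w, ¬ flipAt r v v w := fun w h => hv w (flipAt_left_iff.mp h)
  have hne : ∀ j, f j ≠ v := Fin.lastCases
    (fun h => hsink (f 0) (h ▸ hlast)) (fun i h => hsink (f i.succ) (h ▸ hf i))
  have hr : ∀ a b, flipAt r v (f a) (f b) → r (f a) (f b) :=
    fun a b => (flipAt_iff_of_ne (hne a) (hne b)).mp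
  exact hacyc ⟨n, f, fun i => hr _ _ (hf i), hr _ _ hlast⟩

theorem isIdealOf_flipAt_diff_singleton (hI : IsIdealOf r I) (hv : ∀ u, ¬ r u v) :
    IsIdealOf (flipAt r v) (I \ {v}) := by
  rw [isIdealOf_iff] at hI ⊢
  rintro x y hxy ⟨hyI, hyv : y ≠ v⟩
  by_cases hxv : x = v
  · subst hxv
    exact absurd (flipAt_left_iff.mp hxy) (hv y)
  · exact ⟨hI x y ((flipAt_iff_of_ne hxv hyv).mp hxy) hyI, hxv⟩

end Flip

open Classical in
noncomputable def reverseCut (r : V → V → Prop) (I : Set V) : V → V → Prop :=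
  fun x y => if (x ∈ I ↔ y ∈ I) then r x y else r y x

theorem reverseCut_empty : reverseCut r ∅ = r := by
  funext x y; simp [reverseCut]

theorem reverseCut_flipAt_diff_singleton {v : V} (hv : v ∈ I) :
    reverseCut (flipAt r v) (I \ {v}) = reverseCut r I := by
  funext x y
  by_cases hx : x = v <;> by_cases hy : y = v
  · subst hx hy; simp [reverseCut]
  · subst hx; by_cases hyI : y ∈ I <;> simp [reverseCut, hv, hy, hyI]
  · subst hy; by_cases hxI : x ∈ I <;> simp [reverseCut, hv, hx, hxI]
  · by_cases hxI : x ∈ I <;> by_cases hyI : y ∈ I <;>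
      simp [reverseCut, hx, hy, hxI, hyI, flipAt_iff_of_ne hx hy, flipAt_iff_of_ne hy hx]

theorem isFilterOf_reverseCut (hI : IsIdealOf r I) : IsFilterOf (reverseCut r I) I := by
  rw [isFilterOf_iff]
  intro x y hxy hx
  by_contra hy
  have hyx : r y x := by simpa [reverseCut, hx, hy] using hxy
  exact hy (hI y x (.single hyx) hx)

theorem toricEquiv_reverseCut [Finite V] (hacyc : ¬ HasCycle r) (hI : IsIdealOf r I) :
    ToricEquiv r (reverseCut r I) := by
  induction hn : I.ncard generalizing r I with
  | zero =>
    rw [(Set.ncard_eq_zero).mp hn, reverseCut_empty]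
    exact .refl
  | succ n ih =>
    obtain ⟨v, hvI, hmin⟩ := (wellFounded_transGen_of_not_hasCycle hacyc).has_min I
      (Set.nonempty_of_ncard_ne_zero (by omega))
    have hsource : ∀ u, ¬ r u v := fun u hu =>
      hmin u (hI u v (.single hu) hvI) (.single hu)
    have hn' : (I \ {v}).ncard = n := by
      rw [Set.ncard_sdiff_singleton_of_mem hvI]; omega
    rw [← reverseCut_flipAt_diff_singleton hvI]
    exact .head ⟨v, hsource, rfl⟩ (ih (not_hasCycle_flipAt hacyc hsource)
      (isIdealOf_flipAt_diff_singleton hI hsource) hn')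

theorem stmt_9_general (V : Type) [Fintype V] (r : V → V → Prop)
    (hacyc : ¬ HasCycle r) (I : Set V) (hI : IsIdealOf r I) :
    ∃ r'' : V → V → Prop, ToricEquiv r r'' ∧ IsFilterOf r'' I :=
  ⟨reverseCut r I, toricEquiv_reverseCut hacyc hI, isFilterOf_reverseCut hI⟩

/-- If I is an order ideal of the reachability poset P(G,ω) of an acyclic
orientation ω, then some ω'' obtained from ω by a sequence of source-to-sink flips has
I as an order filter of P(G,ω''). -/
theorem stmt_9 (V : Type) [Fintype V] (G : SimpleGraph V) (r : V → V → Prop)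
    (hor : IsOrientation G r) (hacyc : ¬ HasCycle r) (I : Set V) (hI : IsIdealOf r I) :
    ∃ r'' : V → V → Prop, ToricEquiv r r'' ∧ IsFilterOf r'' I :=
  stmt_9_general V r hacyc I hI
end

section
/- Let G = (V,E) be a finite graph and ω, ω' torically equivalent acyclic orientations (related by a sequence of source-to-sink flips). If i₁ → i₂ → ⋯ → i_m is a toric directed path in ω (a directed path such that the edge i₁ → i_m is also present), then ω' contains a toric directed path j₁ → ⋯ → j_m where (j₁, …, j_m) is a cyclic shift of (i₁, …, i_m). -/
/-
A source `v` has no incoming edge, so on a toric path it can only sit at the first position.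
If it does not occur, flipping at `v` leaves every edge of the path alone. If it occurs as
`f 0`, the flip reverses exactly the two path edges at `f 0`, namely `f 0 → f 1` and the closing
edge `f 0 → f m`; then `f 1 → ⋯ → f m → f 0` is a toric path of the flipped orientation, closed
by `f 1 → f 0`. This is the rotation of the path by one step, and rotations compose along a
sequence of flips.
-/

def IsToricPath {V : Type*} (r : V → V → Prop) {m : ℕ} (f : Fin (m + 1) → V) : Prop :=
  (∀ i : Fin m, r (f i.castSucc) (f i.succ)) ∧ r (f 0) (f (Fin.last m))

section flipAt

variable {V : Type*} {r : V → V → Prop} {v : V}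

lemma flipAt_of_ne {i j : V} (hi : i ≠ v) (hj : j ≠ v) (h : r i j) : flipAt r v i j :=
  Or.inr ⟨by tauto, h⟩

lemma flipAt_self_right_of_rel {j : V} (h : r v j) : flipAt r v j v :=
  Or.inl ⟨Or.inr rfl, h⟩

end flipAt

namespace IsToricPath

variable {V : Type*} {r : V → V → Prop} {m : ℕ} {f : Fin (m + 1) → V}

lemma eq_zero_of_source (hp : IsToricPath r f) {v : V} (hv : ∀ u, ¬ r u v) {q : Fin (m + 1)}
    (hq : f q = v) : q = 0 := by
  obtain rfl | ⟨j, rfl⟩ := q.eq_zero_or_eq_succ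
  · rfl
  · exact absurd (hq ▸ hp.1 j) (hv _)

lemma flipAt_of_forall_ne (hp : IsToricPath r f) {v : V} (hv : ∀ q, f q ≠ v) :
    IsToricPath (flipAt r v) f :=
  ⟨fun i => flipAt_of_ne (hv _) (hv _) (hp.1 i), flipAt_of_ne (hv _) (hv _) hp.2⟩

lemma flipAt_rotate_one {n : ℕ} {f : Fin (n + 2) → V} (hp : IsToricPath r f)
    (hne : ∀ q, q ≠ 0 → f q ≠ f 0) :
    IsToricPath (flipAt r (f 0)) (fun i => f (i + 1)) := by
  have hsucc (j : Fin (n + 1)) : f j.succ ≠ f 0 := hne _ (Fin.succ_ne_zero j)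
  refine ⟨fun i => ?_, ?_⟩
  · induction i using Fin.lastCases with
    | last =>
      simp only [Fin.coeSucc_eq_succ, Fin.succ_last, Fin.last_add_one]
      exact flipAt_self_right_of_rel hp.2
    | cast j =>
      simp only [Fin.coeSucc_eq_succ, Fin.succ_castSucc]
      exact flipAt_of_ne (Fin.succ_castSucc j ▸ hsucc _) (hsucc _) (hp.1 j.succ)
  · simp only [zero_add, Fin.last_add_one]
    have h01 : r (f 0) (f 1) := Fin.succ_zero_eq_one ▸ hp.1 0
    exact flipAt_self_right_of_rel h01

lemma exists_rotate_of_flipStep {r' : V → V → Prop} (hp : IsToricPath r f)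
    (h : FlipStep r r') : ∃ k : Fin (m + 1), IsToricPath r' (fun i => f (i + k)) := by
  obtain ⟨v, hv, rfl⟩ := h
  by_cases hmem : ∃ q, f q = v
  · obtain ⟨q, hq⟩ := hmem
    obtain rfl := hp.eq_zero_of_source hv hq
    obtain _ | n := m
    · exact absurd (hq ▸ hp.2) (hv _)
    · subst hq
      exact ⟨1, hp.flipAt_rotate_one fun q' hq' h' => hq' (hp.eq_zero_of_source hv h')⟩
  · push Not at hmem
    exact ⟨0, by simpa using hp.flipAt_of_forall_ne hmem⟩

lemma exists_rotate_of_toricEquiv {r' : V → V → Prop} (hp : IsToricPath r f)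
    (h : ToricEquiv r r') : ∃ k : Fin (m + 1), IsToricPath r' (fun i => f (i + k)) := by
  induction h with
  | refl => exact ⟨0, by simpa using hp⟩
  | tail _ hstep ih =>
    obtain ⟨k, hk⟩ := ih
    obtain ⟨k', hk'⟩ := hk.exists_rotate_of_flipStep hstep
    exact ⟨k' + k, by simpa only [add_assoc] using hk'⟩

end IsToricPath

theorem stmt_16_general (V : Type) (r r' : V → V → Prop)
    (heq : ToricEquiv r r')
    (m : ℕ) (f : Fin (m + 1) → V)
    (hpath : ∀ i : Fin m, r (f i.castSucc) (f i.succ))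
    (hclose : r (f 0) (f (Fin.last m))) :
    ∃ k : Fin (m + 1),
      (∀ i : Fin m, r' (f (i.castSucc + k)) (f (i.succ + k))) ∧
      r' (f (0 + k)) (f (Fin.last m + k)) :=
  IsToricPath.exists_rotate_of_toricEquiv ⟨hpath, hclose⟩ heq

/-- If ω and ω' are torically equivalent acyclic orientations of G and
i₁ → ⋯ → i_m is a toric directed path of ω (directed path whose closing edge i₁ → i_m
is also present), then ω' contains a toric directed path on a cyclic shift of
(i₁, …, i_m). -/
theorem stmt_16 (V : Type) [Fintype V] (G : SimpleGraph V) (r r' : V → V → Prop)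
    (hor : IsOrientation G r) (hacyc : ¬ HasCycle r) (heq : ToricEquiv r r')
    (m : ℕ) (f : Fin (m + 1) → V)
    (hpath : ∀ i : Fin m, r (f i.castSucc) (f i.succ))
    (hclose : r (f 0) (f (Fin.last m))) :
    ∃ k : Fin (m + 1),
      (∀ i : Fin m, r' (f (i.castSucc + k)) (f (i.succ + k))) ∧
      r' (f (0 + k)) (f (Fin.last m + k)) :=
  stmt_16_general V r r' heq m f hpath hclose
end
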